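/- arXiv:1802.00960 — 6 statements merged into one kernel-verified Lean document; each statement's English description precedes it below -/
import Mathlib

section
/- (Schröder–Bernstein for locally finite categories) If A and B are objects of a locally finite category with monomorphisms f : A → B and g : B → A, then both f and g are isomorphisms; in particular A ≅ B. -/
open CategoryTheory

universe u v

lemma mono_endo_isIso {C : Type u} [Category.{v} C] {A : C} [Finite (A ⟶ A)]
    (h : A ⟶ A) (hm : Mono h) : IsIso h := by
  have inj : Function.Injective (fun u : A ⟶ A => u ≫ h) := fun u v huv => by
    exact (cancel_mono h).mp huv
  obtain ⟨u, hu⟩ := (Finite.injective_iff_surjective.mp inj) (𝟙 A)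
  simp only at hu
  refine ⟨u, ?_, hu⟩
  have : (h ≫ u) ≫ h = 𝟙 A ≫ h := by rw [Category.assoc, hu]; simp
  exact (cancel_mono h).mp this

theorem schroeder_bernstein {C : Type u} [Category.{v} C]
    (locallyFinite : ∀ A B : C, Finite (A ⟶ B))
    (A B : C) (f : A ⟶ B) (g : B ⟶ A) (hf : Mono f) (hg : Mono g) :
    IsIso f ∧ IsIso g ∧ Nonempty (A ≅ B) := by
  have : Finite (A ⟶ A) := locallyFinite A A
  have : Finite (B ⟶ B) := locallyFinite B B
  have hfg : IsIso (f ≫ g) := mono_endo_isIso _ (mono_comp f g)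
  have hgf : IsIso (g ≫ f) := mono_endo_isIso _ (mono_comp g f)
  have hfI : IsIso f := by
    refine ⟨g ≫ inv (f ≫ g), by rw [← Category.assoc, IsIso.hom_inv_id], ?_⟩
    have : ((g ≫ inv (f ≫ g)) ≫ f) ≫ g = 𝟙 B ≫ g := by
      simp
    exact (cancel_mono g).mp this
  have hgI : IsIso g := by
    refine ⟨f ≫ inv (g ≫ f), by rw [← Category.assoc, IsIso.hom_inv_id], ?_⟩
    have : ((f ≫ inv (g ≫ f)) ≫ g) ≫ f = 𝟙 A ≫ f := by
      simp
    exact (cancel_mono f).mp this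
  exact ⟨hfI, hgI, ⟨asIso f⟩⟩
end

section
/- In a locally finite topos, given an infinite sequence of epimorphisms f_n : A_n → A_{n+1} (n ∈ ℕ), there exists N such that f_n is an isomorphism for all n ≥ N. -/
open CategoryTheory CategoryTheory.Limits

universe u v

/-- A subobject classifier, phrased as a property of a category with a terminal object. -/
class HasSubobjectClassifier (C : Type u) [Category.{v} C] [HasTerminal C] : Prop where
  exists_classifier : ∃ (Ω : C) (truth : ⊤_ C ⟶ Ω), ∀ {U X : C} (m : U ⟶ X), Mono m →
    ∃! χ : X ⟶ Ω, IsPullback m (terminal.from U) χ truth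

/-!
The sets `Hom(A n × A n, Ω)` shrink along the sequence, since precomposition with the epimorphism
`f n × f n` is injective; being finite, their cardinalities stabilise, and from then on
precomposition is bijective. The classifying map of the diagonal of `A n` then factors through
`f n × f n`, which forces the kernel pair of `f n` into the diagonal, i.e. `f n` is mono. A topos
is balanced, so `f n` is an isomorphism.
-/

open MonoidalCategory CartesianMonoidalCategory

namespace HasSubobjectClassifier

variable {C : Type u} [Category.{v} C] [HasTerminal C] [_root_.HasSubobjectClassifier C]

noncomputable def classifier : Subobject.Classifier C := by
  choose Ω truth hχ using exists_classifier (C := C)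
  exact .mkOfTerminalΩ₀ (⊤_ C) terminalIsTerminal Ω truth
    (fun m _ => (hχ m ‹_›).exists.choose) (fun m _ => (hχ m ‹_›).exists.choose_spec)
    (fun m _ _ h => (hχ m ‹_›).unique h (hχ m ‹_›).exists.choose_spec)

instance : CategoryTheory.HasSubobjectClassifier C := ⟨⟨classifier⟩⟩

end HasSubobjectClassifier

open CategoryTheory.HasSubobjectClassifier

section Counting

variable {C : Type u} [Category.{v} C]

lemma card_hom_le_of_epi {X Y : C} (f : X ⟶ Y) [Epi f] (Z : C) [Finite (X ⟶ Z)] :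
    Nat.card (Y ⟶ Z) ≤ Nat.card (X ⟶ Z) :=
  Nat.card_le_card_of_injective (f ≫ ·) fun _ _ => (cancel_epi f).1

lemma comp_surjective_of_card_hom_eq {X Y : C} (f : X ⟶ Y) [Epi f] {Z : C} [Finite (X ⟶ Z)]
    (h : Nat.card (Y ⟶ Z) = Nat.card (X ⟶ Z)) :
    Function.Surjective (f ≫ · : (Y ⟶ Z) → (X ⟶ Z)) :=
  ((Nat.bijective_iff_injective_and_card _).2 ⟨fun _ _ => (cancel_epi f).1, h⟩).2

end Counting

instance epi_whiskerLeft {C : Type u} [Category.{v} C] [MonoidalCategory C] [MonoidalClosed C]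
    (X : C) {Y Y' : C} (g : Y ⟶ Y') [Epi g] : Epi (X ◁ g) :=
  have : (tensorLeft X).IsLeftAdjoint := (ihom.adjunction X).isLeftAdjoint
  (tensorLeft X).map_epi g

section Cartesian

variable {C : Type u} [Category.{v} C] [CartesianMonoidalCategory C]

instance epi_whiskerRight [MonoidalClosed C] {X X' : C} (f : X ⟶ X') [Epi f] (Y : C) :
    Epi (f ▷ Y) := by
  let _ := BraidedCategory.ofCartesianMonoidalCategory (C := C)
  rw [← epi_comp_iff_of_isIso _ (β_ X' Y).hom, BraidedCategory.braiding_naturality_left]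
  infer_instance

instance epi_tensorHom [MonoidalClosed C] {X X' Y Y' : C} (f : X ⟶ X') (g : Y ⟶ Y')
    [Epi f] [Epi g] : Epi (f ⊗ₘ g) := by
  rw [MonoidalCategory.tensorHom_def]
  infer_instance

variable [CategoryTheory.HasSubobjectClassifier C]

lemma eq_of_lift_comp_χ_diag {Z X : C} {u v : Z ⟶ X}
    (h : lift u v ≫ χ (lift (𝟙 X) (𝟙 X)) = lift u u ≫ χ (lift (𝟙 X) (𝟙 X))) : u = v := by
  have hpb := isPullback_χ (lift (𝟙 X) (𝟙 X))
  have hw : lift u v ≫ χ (lift (𝟙 X) (𝟙 X)) = (u ≫ Subobject.Classifier.χ₀ _ X) ≫ truth C := by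
    rw [h, Category.assoc, ← hpb.w, ← Category.assoc, comp_lift, Category.comp_id]
  obtain ⟨l, hl, -⟩ := hpb.exists_lift _ _ hw
  have hu := congrArg (· ≫ fst X X) hl
  have hv := congrArg (· ≫ snd X X) hl
  simp only [Category.assoc, lift_fst, lift_snd, Category.comp_id] at hu hv
  rw [← hu, ← hv]

lemma mono_of_comp_eq_χ_diag {X Y : C} (f : X ⟶ Y) {φ : Y ⊗ Y ⟶ Ω C}
    (hφ : (f ⊗ₘ f) ≫ φ = χ (lift (𝟙 X) (𝟙 X))) : Mono f :=
  ⟨fun u v huv => eq_of_lift_comp_χ_diag (by rw [← hφ, lift_map_assoc, lift_map_assoc, huv])⟩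

lemma mono_of_card_hom_tensor_eq [MonoidalClosed C] {X Y : C} (f : X ⟶ Y) [Epi f]
    [Finite (X ⊗ X ⟶ Ω C)] (h : Nat.card (Y ⊗ Y ⟶ Ω C) = Nat.card (X ⊗ X ⟶ Ω C)) : Mono f :=
  have ⟨_, hφ⟩ := comp_surjective_of_card_hom_eq (f ⊗ₘ f) h (χ (lift (𝟙 X) (𝟙 X)))
  mono_of_comp_eq_χ_diag f hφ

end Cartesian

theorem epi_sequence_stabilizes_general {C : Type u} [Category.{v} C] [CartesianMonoidalCategory C]
    [MonoidalClosed C] [_root_.HasSubobjectClassifier C]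
    (locallyFinite : ∀ A B : C, Finite (A ⟶ B))
    (A : ℕ → C) (f : ∀ n, A n ⟶ A (n + 1)) (hf : ∀ n, Epi (f n)) :
    ∃ N, ∀ n ≥ N, IsIso (f n) := by
  have := locallyFinite
  have := hf
  have hanti : Antitone fun n => Nat.card (A n ⊗ A n ⟶ Ω C) :=
    antitone_nat_of_succ_le fun n => card_hom_le_of_epi (f n ⊗ₘ f n) _
  obtain ⟨N, hN⟩ := WellFoundedLT.antitone_chain_condition hanti
  refine ⟨N, fun n hn => ?_⟩
  have := mono_of_card_hom_tensor_eq (f n) ((hN (n + 1) (by omega)).symm.trans (hN n hn))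
  exact isIso_of_mono_of_epi (f n)

theorem epi_sequence_stabilizes {C : Type u} [Category.{v} C] [HasFiniteLimits C] [CartesianMonoidalCategory C]
    [MonoidalClosed C] [_root_.HasSubobjectClassifier C]
    (locallyFinite : ∀ A B : C, Finite (A ⟶ B))
    (A : ℕ → C) (f : ∀ n, A n ⟶ A (n + 1)) (hf : ∀ n, Epi (f n)) :
    ∃ N, ∀ n ≥ N, IsIso (f n) :=
  epi_sequence_stabilizes_general locallyFinite A f hf
end

section
/- In a locally finite topos, given an object E and an infinite sequence of monomorphisms A₀ → A₁ → ⋯ where each A_n is a subobject of E (i.e. admits a monomorphism into E compatible with the sequence), all the arrows in the sequence are isomorphisms from some point on. -/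
open CategoryTheory CategoryTheory.Limits

universe u v

/-- The former Mathlib class `ChosenFiniteProducts` (data of chosen finite products). -/
class ChosenFiniteProducts (C : Type u) [Category.{v} C] where
  product : (X Y : C) → LimitCone (pair X Y)
  terminal : LimitCone (Functor.empty.{0} C)

/-- The former Mathlib `CartesianClosed`: monoidal closed for the monoidal structure given by
the finite products. -/
abbrev CartesianClosed (C : Type u) [Category.{v} C] [HasFiniteProducts C] :=
  @MonoidalClosed C _ (CartesianMonoidalCategory.ofHasFiniteProducts (C := C)).toMonoidalCategory

/-- A subobject classifier, phrased as a property of a category with a terminal object. -/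
class HasSubobjectClassifier' (C : Type u) [Category.{v} C] [HasTerminal C] : Prop where
  exists_classifier : ∃ (Ω : C) (truth : ⊤_ C ⟶ Ω), ∀ {U X : C} (m : U ⟶ X), Mono m →
    ∃! χ : X ⟶ Ω, IsPullback m (terminal.from U) χ truth

/-!
Classifying maps identify the subobjects of `E` with the arrows `E ⟶ Ω`, so a topos with finite
hom-sets has only finitely many subobjects of `E`. The images of the `A n` form an increasing chain
of subobjects of `E`, which must therefore become constant; and an arrow over `E` between
monomorphisms representing the same subobject is an isomorphism.
-/

namespace HasSubobjectClassifier'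

variable {C : Type u} [Category.{v} C] [HasTerminal C] [HasSubobjectClassifier' C]

noncomputable def classifier : Subobject.Classifier C :=
  have h := exists_classifier (C := C)
  Subobject.Classifier.mkOfTerminalΩ₀ (⊤_ C) terminalIsTerminal h.choose h.choose_spec.choose
    (fun m hm => (h.choose_spec.choose_spec m hm).choose)
    (fun m hm => (h.choose_spec.choose_spec m hm).choose_spec.1)
    (fun m hm χ hχ => (h.choose_spec.choose_spec m hm).choose_spec.2 χ hχ)

theorem finite_subobject [HasPullbacks C] (E : C) [Finite (E ⟶ classifier.Ω)] :
    Finite (Subobject E) :=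
  Finite.of_equiv _ (Subobject.Classifier.representableBy classifier).homEquiv

end HasSubobjectClassifier'

theorem exists_forall_ge_isIso_of_wellFoundedGT_subobject {C : Type u} [Category.{v} C] {E : C}
    [WellFoundedGT (Subobject E)] (A : ℕ → C) (g : ∀ n, A n ⟶ A (n + 1)) (m : ∀ n, A n ⟶ E)
    [∀ n, Mono (m n)] (compat : ∀ n, g n ≫ m (n + 1) = m n) :
    ∃ N, ∀ n ≥ N, IsIso (g n) := by
  let image : ℕ →o Subobject E :=
    ⟨fun n => Subobject.mk (m n),
      monotone_nat_of_le_succ fun n => Subobject.mk_le_mk_of_comm (g n) (compat n)⟩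
  obtain ⟨N, hN⟩ := WellFoundedGT.monotone_chain_condition image
  refine ⟨N, fun n hn => ?_⟩
  have hstable : image n = image (n + 1) := (hN n hn).symm.trans (hN (n + 1) (by omega))
  by_contra hg
  exact (Subobject.mk_lt_mk_of_comm (g n) (compat n) hg).ne hstable

theorem mono_subobject_sequence_stabilizes_general {C : Type u} [Category.{v} C] [HasFiniteLimits C]
    [HasSubobjectClassifier' C]
    (locallyFinite : ∀ A B : C, Finite (A ⟶ B))
    (E : C) (A : ℕ → C) (g : ∀ n, A n ⟶ A (n + 1))
    (m : ∀ n, A n ⟶ E) (hm : ∀ n, Mono (m n))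
    (compat : ∀ n, g n ≫ m (n + 1) = m n) :
    ∃ N, ∀ n ≥ N, IsIso (g n) := by
  have := hm
  have := locallyFinite E HasSubobjectClassifier'.classifier.Ω
  have := HasSubobjectClassifier'.finite_subobject E
  exact exists_forall_ge_isIso_of_wellFoundedGT_subobject A g m compat

theorem mono_subobject_sequence_stabilizes {C : Type u} [Category.{v} C] [HasFiniteLimits C] [ChosenFiniteProducts C]
    [CartesianClosed C] [HasSubobjectClassifier' C]
    (locallyFinite : ∀ A B : C, Finite (A ⟶ B))
    (E : C) (A : ℕ → C) (g : ∀ n, A n ⟶ A (n + 1)) (hg : ∀ n, Mono (g n))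
    (m : ∀ n, A n ⟶ E) (hm : ∀ n, Mono (m n))
    (compat : ∀ n, g n ≫ m (n + 1) = m n) :
    ∃ N, ∀ n ≥ N, IsIso (g n) :=
  mono_subobject_sequence_stabilizes_general locallyFinite E A g m hm compat
end

section
/- In an elementary topos, for every object A the exponential Ω^A is injective, and the singleton map {·} : A → Ω^A is a monomorphism; hence every object embeds into an injective object. -/
open CategoryTheory CategoryTheory.Limits MonoidalCategory CartesianClosed

universe u v

/-!
A map `X ⟶ Ω` is the classifying map of a subobject `U ↪ X`; along a mono `X ↪ Y`, the
subobject `U ↪ Y` is classified by a map `Y ⟶ Ω` that restricts to the given one, so `Ω` is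
injective. As `A ⊗ -` preserves monos, its right adjoint `A ⟹ -` preserves injectives.

If `u ≫ curry δ = v ≫ curry δ`, where `δ` classifies the diagonal, then `δ (a, u) = δ (a, v)` for all `a`;
at `a = u` the left side is true, so `(u, v)` factors through the diagonal, i.e. `u = v`.
-/

namespace CategoryTheory

open CartesianMonoidalCategory

variable {C : Type u} [Category.{v} C]

lemma CartesianMonoidalCategory.mono_whiskerLeft [CartesianMonoidalCategory C] (A : C)
    {X Y : C} (m : X ⟶ Y) [Mono m] : Mono (A ◁ m) :=
  ⟨fun a b h => hom_ext _ _ (by simpa using h =≫ fst A Y)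
    ((cancel_mono m).1 (by simpa using h =≫ snd A Y))⟩

instance [CartesianMonoidalCategory C] (A : C) : (tensorLeft A).PreservesMonomorphisms :=
  ⟨fun m _ => mono_whiskerLeft A m⟩

namespace Subobject.Classifier

noncomputable def ofExistsUnique [HasTerminal C] (Ω : C) (truth : ⊤_ C ⟶ Ω)
    (classifies : ∀ {U X : C} (m : U ⟶ X), Mono m →
      ∃! χ : X ⟶ Ω, IsPullback m (terminal.from U) χ truth) : Classifier C :=
  mkOfTerminalΩ₀ (⊤_ C) terminalIsTerminal Ω truth
    (fun m _ => (classifies m inferInstance).choose)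
    (fun m _ => (classifies m inferInstance).choose_spec.1)
    (fun m _ χ' h => (classifies m inferInstance).choose_spec.2 χ' h)

variable (𝒞 : Classifier C)

lemma comp_χ_comp {U X Y : C} (i : U ⟶ X) [Mono i] (m : X ⟶ Y) [Mono m] :
    m ≫ 𝒞.χ (i ≫ m) = 𝒞.χ i :=
  𝒞.uniq i (by
    simpa using (IsPullback.of_vert_isIso_mono (snd := 𝟙 U) ⟨by simp⟩).paste_vert
      (𝒞.isPullback (i ≫ m)))

lemma injective_Ω [HasPullbacks C] : Injective 𝒞.Ω where
  factors φ m _ := by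
    obtain ⟨U, i, _, rfl⟩ := 𝒞.surjective_χ φ
    exact ⟨𝒞.χ (i ≫ m), 𝒞.comp_χ_comp i m⟩

section Cartesian

variable [CartesianMonoidalCategory C]

lemma lift_comp_χ_diag_eq_iff {A T : C} (a b : T ⟶ A) :
    lift a b ≫ 𝒞.χ (lift (𝟙 A) (𝟙 A)) = 𝒞.χ₀ T ≫ 𝒞.truth ↔ a = b := by
  have diag := 𝒞.isPullback (lift (𝟙 A) (𝟙 A))
  constructor
  · intro h
    obtain ⟨l, hl, -⟩ := diag.exists_lift _ _ h
    obtain ⟨rfl, rfl⟩ : l = a ∧ l = b :=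
      ⟨by simpa using hl =≫ fst A A, by simpa using hl =≫ snd A A⟩
    rfl
  · rintro rfl
    rw [show lift a a = a ≫ lift (𝟙 A) (𝟙 A) by simp, Category.assoc, diag.w,
      ← Category.assoc, Subsingleton.elim (a ≫ 𝒞.χ₀ A) (𝒞.χ₀ T)]

lemma mono_curry_χ_diag [MonoidalClosed C] (A : C) :
    Mono (MonoidalClosed.curry (𝒞.χ (lift (𝟙 A) (𝟙 A)))) where
  right_cancellation u v huv := by
    rw [← MonoidalClosed.curry_natural_left, ← MonoidalClosed.curry_natural_left] at huv
    have key : lift u u ≫ 𝒞.χ (lift (𝟙 A) (𝟙 A)) = lift u v ≫ 𝒞.χ (lift (𝟙 A) (𝟙 A)) := by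
      simpa using lift u (𝟙 _) ≫= MonoidalClosed.curry_injective huv
    rwa [(𝒞.lift_comp_χ_diag_eq_iff u u).2 rfl, eq_comm, 𝒞.lift_comp_χ_diag_eq_iff] at key

end Cartesian

end Subobject.Classifier

end CategoryTheory

theorem omega_power_injective_and_singleton_mono
    {C : Type u} [Category.{v} C] [HasFiniteLimits C] [CartesianMonoidalCategory C]
    [MonoidalClosed C]
    (Ω : C) (truth : ⊤_ C ⟶ Ω)
    (classifies : ∀ {U X : C} (m : U ⟶ X), Mono m →
      ∃! χ : X ⟶ Ω, IsPullback m (terminal.from U) χ truth)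
    (A : C) :
    Injective (A ⟹ Ω) ∧
      Mono (MonoidalClosed.curry
        (classifies (CartesianMonoidalCategory.lift (𝟙 A) (𝟙 A))
          inferInstance).choose) := by
  let 𝒞 := Subobject.Classifier.ofExistsUnique Ω truth classifies
  have := 𝒞.injective_Ω
  exact ⟨Injective.injective_of_adjoint (ihom.adjunction A) 𝒞.Ω, 𝒞.mono_curry_χ_diag A⟩
end

section
/- In a locally finite topos, every object A admits an injective hull: an essential monomorphism e : A → E with E injective. -/
/-!
`Ω` is injective (a map `S ⟶ Ω` is a subobject of `S`, which can be pushed forward along a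
mono), hence so is `Ω^A`, and the singleton map embeds `A` into `Ω^A`. Counting maps into `Ω`
(that is, subobjects) gives a measure which grows along monos and is strictly larger on the
codomain of a mono that is not an isomorphism. An essential extension `A ⟶ E` embeds into
`Ω^A`, so there is one maximising this measure; then every essential extension of `E` is an
isomorphism. Such an `E` is injective: minimising the number of relations `Z ⊗ Z ⟶ Ω` over the
maps `g` out of `Ω^E` with `E ⟶ Ω^E ⟶ Z` monic produces an essential extension of `E`, which
must be an isomorphism, so `E` is a retract of `Ω^E`.
-/

open CategoryTheory CategoryTheory.Limits

universe u v

/-- A monomorphism `e` is essential if whenever `e ≫ g` is monic, so is `g`. -/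
def Essential {C : Type u} [Category.{v} C] {A B : C} (e : A ⟶ B) : Prop :=
  Mono e ∧ ∀ ⦃X : C⦄ (g : B ⟶ X), Mono (e ≫ g) → Mono g

open MonoidalCategory CartesianMonoidalCategory

theorem nonempty_classifier (C : Type u) [Category.{v} C] [HasTerminal C]
    [_root_.HasSubobjectClassifier C] : Nonempty (Subobject.Classifier C) := by
  obtain ⟨Ω, truth, h⟩ := HasSubobjectClassifier.exists_classifier (C := C)
  exact ⟨.mkOfTerminalΩ₀ (⊤_ C) terminalIsTerminal Ω truth (fun m _ => (h m ‹_›).choose)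
    (fun m _ => (h m ‹_›).choose_spec.1) (fun m _ χ hχ => (h m ‹_›).choose_spec.2 χ hχ)⟩

section Essential

variable {C : Type u} [Category.{v} C]

theorem essential_id (A : C) : Essential (𝟙 A) :=
  ⟨inferInstance, fun _ g hg => by rwa [Category.id_comp] at hg⟩

theorem Essential.comp {A B D : C} {e : A ⟶ B} {v : B ⟶ D} (he : Essential e)
    (hv : Essential v) : Essential (e ≫ v) :=
  have := he.1
  have := hv.1
  ⟨mono_comp e v, fun _ w hw => hv.2 w (he.2 (v ≫ w) (by rwa [Category.assoc] at hw))⟩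

theorem Essential.exists_mono_fac {A E I : C} [Injective I] {e : A ⟶ E} (he : Essential e)
    (j : A ⟶ I) [Mono j] : ∃ i : E ⟶ I, Mono i ∧ e ≫ i = j :=
  have := he.1
  have hfac := Injective.comp_factorThru j e
  ⟨_, he.2 _ (by rwa [hfac]), hfac⟩

end Essential

theorem CategoryTheory.Injective.surjective_comp {C : Type u} [Category.{v} C] {I M Z : C}
    [Injective I] (m : M ⟶ Z) [Mono m] : Function.Surjective fun χ : Z ⟶ I => m ≫ χ :=
  fun χ => ⟨Injective.factorThru χ m, Injective.comp_factorThru χ m⟩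

namespace CategoryTheory.CartesianMonoidalCategory

variable {C : Type u} [Category.{v} C] [CartesianMonoidalCategory C]

instance preservesMonomorphisms_tensorLeft (X : C) : (tensorLeft X).PreservesMonomorphisms where
  preserves f _ := ⟨fun a b h => hom_ext _ _
    (by simpa using congrArg (· ≫ fst _ _) h)
    ((cancel_mono f).1 (by simpa using congrArg (· ≫ snd _ _) h))⟩

variable [MonoidalClosed C]

instance epi_whiskerLeft (X : C) {Y Z : C} (f : Y ⟶ Z) [Epi f] : Epi (X ◁ f) :=
  (tensorLeft X).map_epi f

instance epi_whiskerRight {X Y : C} (f : X ⟶ Y) [Epi f] (Z : C) : Epi (f ▷ Z) := by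
  let : BraidedCategory C := .ofCartesianMonoidalCategory
  rw [← (epi_comp_iff_of_isIso (f ▷ Z) (β_ Y Z).hom), BraidedCategory.braiding_naturality_left]
  infer_instance

instance epi_tensorHom {X Y X' Y' : C} (f : X ⟶ Y) (g : X' ⟶ Y') [Epi f] [Epi g] :
    Epi (f ⊗ₘ g) := by
  rw [MonoidalCategory.tensorHom_def]
  infer_instance

end CategoryTheory.CartesianMonoidalCategory

namespace CategoryTheory.Subobject.Classifier

variable {C : Type u} [Category.{v} C]

section Pullbacks

variable [HasPullbacks C] (𝒞 : Classifier C)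

noncomputable def subobjectEquiv (X : C) : (X ⟶ 𝒞.Ω) ≃ Subobject X :=
  𝒞.representableBy.homEquiv

theorem subobjectEquiv_comp {X Y : C} (f : X ⟶ Y) (φ : Y ⟶ 𝒞.Ω) :
    𝒞.subobjectEquiv X (f ≫ φ) = (Subobject.pullback f).obj (𝒞.subobjectEquiv Y φ) :=
  𝒞.representableBy.homEquiv_comp f φ

theorem injective_Ω_s16 : Injective 𝒞.Ω where
  factors g f _ := ⟨(𝒞.subobjectEquiv _).symm ((Subobject.map f).obj (𝒞.subobjectEquiv _ g)),
    (𝒞.subobjectEquiv _).injective (by simp [subobjectEquiv_comp, Subobject.pullback_map_self])⟩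

theorem isIso_of_injective_comp {M Z : C} (m : M ⟶ Z) [Mono m]
    (h : Function.Injective fun χ : Z ⟶ 𝒞.Ω => m ≫ χ) : IsIso m := by
  rw [Subobject.isIso_iff_mk_eq_top]
  apply (𝒞.subobjectEquiv Z).symm.injective
  apply h
  apply (𝒞.subobjectEquiv M).injective
  simp [subobjectEquiv_comp, Subobject.pullback_self, Subobject.pullback_top]

variable [∀ X : C, Finite (X ⟶ 𝒞.Ω)]

theorem card_hom_Ω_le_of_mono {M Z : C} (m : M ⟶ Z) [Mono m] :
    Nat.card (M ⟶ 𝒞.Ω) ≤ Nat.card (Z ⟶ 𝒞.Ω) :=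
  have := 𝒞.injective_Ω_s16
  Nat.card_le_card_of_surjective _ (Injective.surjective_comp m)

theorem isIso_of_card_hom_Ω_le {M Z : C} (m : M ⟶ Z) [Mono m]
    (h : Nat.card (Z ⟶ 𝒞.Ω) ≤ Nat.card (M ⟶ 𝒞.Ω)) : IsIso m :=
  have := 𝒞.injective_Ω_s16
  𝒞.isIso_of_injective_comp m ((Injective.surjective_comp m).bijective_of_nat_card_le h).1

end Pullbacks

/-- The image of `f` is the subobject with the fewest subobjects through which `f` factors. -/
theorem exists_epi_mono_fac [HasPullbacks C] [HasEqualizers C] (𝒞 : Classifier C)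
    [∀ X : C, Finite (X ⟶ 𝒞.Ω)] {Y Z : C} (f : Y ⟶ Z) :
    ∃ (M : C) (p : Y ⟶ M) (m : M ⟶ Z), Epi p ∧ Mono m ∧ p ≫ m = f := by
  classical
  let P : ℕ → Prop := fun n =>
    ∃ (M : C) (m : M ⟶ Z) (p : Y ⟶ M), Mono m ∧ p ≫ m = f ∧ Nat.card (M ⟶ 𝒞.Ω) = n
  have hP : ∃ n, P n := ⟨_, Z, 𝟙 Z, f, inferInstance, Category.comp_id f, rfl⟩
  obtain ⟨M, m, p, hm, hpm, hM⟩ := Nat.find_spec hP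
  refine ⟨M, p, m, ⟨fun h₁ h₂ h => ?_⟩, hm, hpm⟩
  have hfac : equalizer.lift p h ≫ equalizer.ι h₁ h₂ ≫ m = f := by
    rw [equalizer.lift_ι_assoc, hpm]
  have := 𝒞.isIso_of_card_hom_Ω_le (equalizer.ι h₁ h₂)
    (hM ▸ Nat.find_min' hP ⟨_, _, _, inferInstance, hfac, rfl⟩)
  exact eq_of_epi_equalizer

section Cartesian

variable [CartesianMonoidalCategory C] (𝒞 : Classifier C)

theorem eq_of_lift_comp_χ_diag {T X : C} {a b : T ⟶ X}
    (h : lift a b ≫ 𝒞.χ (lift (𝟙 X) (𝟙 X)) = lift a a ≫ 𝒞.χ (lift (𝟙 X) (𝟙 X))) : a = b := by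
  have hw : lift a b ≫ 𝒞.χ (lift (𝟙 X) (𝟙 X)) = (a ≫ 𝒞.χ₀ X) ≫ 𝒞.truth := by
    rw [h, Category.assoc, ← (𝒞.isPullback (lift (𝟙 X) (𝟙 X))).w, ← Category.assoc, comp_lift,
      Category.comp_id]
  obtain ⟨ℓ, hℓ, -⟩ := (𝒞.isPullback (lift (𝟙 X) (𝟙 X))).exists_lift _ _ hw
  have ha : ℓ = a := by simpa using congrArg (· ≫ fst X X) hℓ
  have hb : ℓ = b := by simpa using congrArg (· ≫ snd X X) hℓ
  rw [← ha, ← hb]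

theorem mono_of_tensorHom_comp_eq_χ_diag {Z M : C} (p : Z ⟶ M) (ψ : M ⊗ M ⟶ 𝒞.Ω)
    (h : (p ⊗ₘ p) ≫ ψ = 𝒞.χ (lift (𝟙 Z) (𝟙 Z))) : Mono p :=
  ⟨fun a b hab => 𝒞.eq_of_lift_comp_χ_diag (by simp [← h, hab])⟩

variable [MonoidalClosed C]

noncomputable def singleton (X : C) : X ⟶ (ihom X).obj 𝒞.Ω :=
  MonoidalClosed.curry (𝒞.χ (lift (𝟙 X) (𝟙 X)))

instance mono_singleton (X : C) : Mono (𝒞.singleton X) := by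
  refine ⟨fun {T} a b hab => 𝒞.eq_of_lift_comp_χ_diag ?_⟩
  have h : (X ◁ a) ≫ 𝒞.χ (lift (𝟙 X) (𝟙 X)) = (X ◁ b) ≫ 𝒞.χ (lift (𝟙 X) (𝟙 X)) := by
    apply MonoidalClosed.curry_injective
    simpa [MonoidalClosed.curry_natural_left, singleton] using hab
  simpa using (congrArg (lift a (𝟙 T) ≫ ·) h).symm

theorem injective_ihom_obj [HasPullbacks C] (X : C) : Injective ((ihom X).obj 𝒞.Ω) :=
  (ihom.adjunction X).map_injective _ 𝒞.injective_Ω_s16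

theorem mono_of_card_hom_tensor_Ω_le [∀ X : C, Finite (X ⟶ 𝒞.Ω)] {Z M : C} (p : Z ⟶ M) [Epi p]
    (h : Nat.card (Z ⊗ Z ⟶ 𝒞.Ω) ≤ Nat.card (M ⊗ M ⟶ 𝒞.Ω)) : Mono p := by
  have hinj : Function.Injective fun ψ : M ⊗ M ⟶ 𝒞.Ω => (p ⊗ₘ p) ≫ ψ :=
    fun _ _ => (cancel_epi _).1
  obtain ⟨ψ, hψ⟩ := (hinj.bijective_of_nat_card_le h).2 (𝒞.χ (lift (𝟙 Z) (𝟙 Z)))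
  exact 𝒞.mono_of_tensorHom_comp_eq_χ_diag p ψ hψ

end Cartesian

section Topos

variable [HasPullbacks C] [HasEqualizers C] [CartesianMonoidalCategory C] [MonoidalClosed C]

theorem exists_essential_comp (𝒞 : Classifier C) [∀ X : C, Finite (X ⟶ 𝒞.Ω)]
    {E I : C} (u : E ⟶ I) [Mono u] : ∃ (Z : C) (g : I ⟶ Z), Essential (u ≫ g) := by
  classical
  let P : ℕ → Prop := fun n =>
    ∃ (Z : C) (g : I ⟶ Z), Mono (u ≫ g) ∧ Nat.card (Z ⊗ Z ⟶ 𝒞.Ω) = n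
  have hP : ∃ n, P n := ⟨_, I, 𝟙 I, by rwa [Category.comp_id], rfl⟩
  obtain ⟨Z, g, hug, hZ⟩ := Nat.find_spec hP
  refine ⟨Z, g, hug, fun X h hh => ?_⟩
  obtain ⟨M, p, m, hp, hm, rfl⟩ := 𝒞.exists_epi_mono_fac h
  have hugp : Mono (u ≫ g ≫ p) := by
    rw [← Category.assoc] at hh ⊢
    exact mono_of_mono _ m
  have := 𝒞.mono_of_card_hom_tensor_Ω_le p (hZ ▸ Nat.find_min' hP ⟨M, g ≫ p, hugp, rfl⟩)
  exact mono_comp p m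

theorem injective_of_forall_essential_isIso (𝒞 : Classifier C) [∀ X : C, Finite (X ⟶ 𝒞.Ω)]
    {E : C} (h : ∀ (Z : C) (v : E ⟶ Z), Essential v → IsIso v) : Injective E := by
  obtain ⟨Z, g, hσg⟩ := 𝒞.exists_essential_comp (𝒞.singleton E)
  have := 𝒞.injective_ihom_obj E
  have := h Z _ hσg
  exact Retract.injective
    ⟨𝒞.singleton E, g ≫ inv (𝒞.singleton E ≫ g), by rw [← Category.assoc, IsIso.hom_inv_id]⟩

end Topos

end CategoryTheory.Subobject.Classifier

theorem injective_hull_exists {C : Type u} [Category.{v} C] [HasFiniteLimits C] [CartesianMonoidalCategory C]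
    [MonoidalClosed C] [_root_.HasSubobjectClassifier C]
    (locallyFinite : ∀ A B : C, Finite (A ⟶ B)) (A : C) :
    ∃ (E : C) (e : A ⟶ E), Essential e ∧ Injective E := by
  classical
  obtain ⟨𝒞⟩ := nonempty_classifier C
  have : ∀ X : C, Finite (X ⟶ 𝒞.Ω) := fun X => locallyFinite X 𝒞.Ω
  have := 𝒞.injective_ihom_obj A
  let P : ℕ → Prop := fun n => ∃ (E : C) (e : A ⟶ E), Essential e ∧ Nat.card (E ⟶ 𝒞.Ω) = n
  have hbound : ∀ n, P n → n ≤ Nat.card ((ihom A).obj 𝒞.Ω ⟶ 𝒞.Ω) := by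
    rintro _ ⟨E, e, he, rfl⟩
    obtain ⟨i, hi, -⟩ := he.exists_mono_fac (𝒞.singleton A)
    exact 𝒞.card_hom_Ω_le_of_mono i
  have hA : P _ := ⟨A, 𝟙 A, essential_id A, rfl⟩
  obtain ⟨E, e, he, hE⟩ := Nat.findGreatest_spec (hbound _ hA) hA
  refine ⟨E, e, he, 𝒞.injective_of_forall_essential_isIso fun Z v hv => ?_⟩
  have := hv.1
  have hev : P _ := ⟨Z, e ≫ v, he.comp hv, rfl⟩
  exact 𝒞.isIso_of_card_hom_Ω_le v (hE ▸ Nat.le_findGreatest (hbound _ hev) hev)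
end

section
/- In a locally finite category, if there exist monomorphisms A → B and B → A then every monomorphism from A to B is an isomorphism. -/
open CategoryTheory

universe u v

/-- A mono endomorphism in a category with finite hom-sets has a left inverse. -/
lemma mono_endo_left_inv {C : Type u} [Category.{v} C]
    (locallyFinite : ∀ A B : C, Finite (A ⟶ B))
    (X : C) (e : X ⟶ X) (he : Mono e) : ∃ s : X ⟶ X, s ≫ e = 𝟙 X := by
  have : Finite (X ⟶ X) := locallyFinite X X
  have hinj : Function.Injective (fun h : X ⟶ X => h ≫ e) := by
    intro a b hab
    exact (cancel_mono e).mp hab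
  have hsurj := Finite.surjective_of_injective hinj
  obtain ⟨s, hs⟩ := hsurj (𝟙 X)
  exact ⟨s, hs⟩

theorem every_mono_iso_of_monos_both_ways {C : Type u} [Category.{v} C]
    (locallyFinite : ∀ A B : C, Finite (A ⟶ B))
    (A B : C)
    (h₁ : ∃ f : A ⟶ B, Mono f) (h₂ : ∃ g : B ⟶ A, Mono g) :
    ∀ f : A ⟶ B, Mono f → IsIso f := by
  obtain ⟨g, hg⟩ := h₂
  intro f hf
  have hgf : Mono (g ≫ f) := mono_comp g f
  obtain ⟨s, hs⟩ := mono_endo_left_inv locallyFinite B (g ≫ f) hgf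
  -- (s ≫ g) ≫ f = 𝟙 B
  have hsec : (s ≫ g) ≫ f = 𝟙 B := by rw [Category.assoc]; exact hs
  -- f ≫ (s ≫ g) = 𝟙 A, using mono f
  have hret : f ≫ (s ≫ g) = 𝟙 A := by
    have : (f ≫ (s ≫ g)) ≫ f = (𝟙 A) ≫ f := by
      rw [Category.assoc, hsec, Category.comp_id, Category.id_comp]
    exact (cancel_mono f).mp this
  exact ⟨s ≫ g, hret, hsec⟩
end
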